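/- arXiv:2110.10970 — 7 statements merged into one kernel-verified Lean document; each statement's English description precedes it below -/
import Mathlib

section
/- For any frame H, the category Fuz(H) has all small products — the product of a family (A_i, μ_i)_{i∈I} is the cartesian product ∏_i A_i with membership (a_i)_{i∈I} ↦ ⋀_{i∈I} μ_i(a_i) — and moreover the class of epimorphisms together with the class of strong monomorphisms forms a proper factorization system on Fuz(H): in particular every morphism f : (A, μ_A) → (B, μ_B) factors as the surjection (A, μ_A) → (f(A), μ_B|_{f(A)}) followed by the strong mono inclusion (f(A), μ_B|_{f(A)}) → (B, μ_B). -/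
open CategoryTheory

universe u

/-- An `H`-fuzzy set: a set together with a membership function into the frame `H`. -/
structure FuzzySet (H : Type u) [Order.Frame H] : Type (u + 1) where
  carrier : Type u
  μ : carrier → H

/-- A morphism of fuzzy sets: a function that does not decrease membership degrees. -/
structure FuzzyHom {H : Type u} [Order.Frame H] (A B : FuzzySet H) : Type u where
  toFun : A.carrier → B.carrier
  le_mem : ∀ x, A.μ x ≤ B.μ (toFun x)

/-- The category `Fuz(H)` of `H`-fuzzy sets. -/
instance fuzCat {H : Type u} [Order.Frame H] : Category.{u} (FuzzySet H) where
  Hom A B := FuzzyHom A B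
  id _ := ⟨_root_.id, fun _ => le_rfl⟩
  comp f g := ⟨g.toFun ∘ f.toFun, fun x => (f.le_mem x).trans (g.le_mem _)⟩
  id_comp _ := rfl
  comp_id _ := rfl
  assoc _ _ _ := rfl

/-- An arrow `m` has the (unique) left lifting property with respect to an arrow `e`. -/
def LLP {C : Type*} [Category C] {A B X Y : C} (e : A ⟶ B) (m : X ⟶ Y) : Prop :=
  ∀ (u : A ⟶ X) (v : B ⟶ Y), u ≫ m = e ≫ v → ∃! k : B ⟶ X, k ≫ m = v

/-- A strong monomorphism: an arrow having the left lifting property with respect to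
all epimorphisms. -/
def IsStrongMonoLLP {C : Type*} [Category C] {X Y : C} (m : X ⟶ Y) : Prop :=
  ∀ ⦃A B : C⦄ (e : A ⟶ B), Epi e → LLP e m

/-- A proper factorization system `(E, M)` on a category. -/
structure IsProperFactorizationSystem (C : Type*) [Category C]
    (E M : MorphismProperty C) : Prop where
  comp_E : ∀ {X Y Z : C} (f : X ⟶ Y) (g : Y ⟶ Z), E f → E g → E (f ≫ g)
  comp_M : ∀ {X Y Z : C} (f : X ⟶ Y) (g : Y ⟶ Z), M f → M g → M (f ≫ g)
  iso_E : ∀ {X Y : C} (f : X ⟶ Y), IsIso f → E f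
  iso_M : ∀ {X Y : C} (f : X ⟶ Y), IsIso f → M f
  epi_of_E : ∀ {X Y : C} (f : X ⟶ Y), E f → Epi f
  mono_of_M : ∀ {X Y : C} (f : X ⟶ Y), M f → Mono f
  llp : ∀ {A B X Y : C} (e : A ⟶ B) (m : X ⟶ Y), E e → M m → LLP e m
  factor : ∀ {X Y : C} (f : X ⟶ Y), ∃ (Z : C) (e : X ⟶ Z) (m : Z ⟶ Y),
    E e ∧ M m ∧ e ≫ m = f

/-- The product of a family of fuzzy sets: the cartesian product of the carriers,
with membership the infimum of the memberships of the components. -/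
def prodFuz {H : Type u} [Order.Frame H] {I : Type u} (A : I → FuzzySet H) : FuzzySet H :=
  ⟨∀ i, (A i).carrier, fun a => ⨅ i, (A i).μ (a i)⟩

/-- The projections of the product of fuzzy sets. -/
def prodFuzProj {H : Type u} [Order.Frame H] {I : Type u} (A : I → FuzzySet H) (i : I) :
    prodFuz A ⟶ A i :=
  ⟨fun a => a i, fun a => iInf_le (fun j => (A j).μ (a j)) i⟩

/-- The image of a fuzzy morphism, with the restricted membership function. -/
def imageFuz {H : Type u} [Order.Frame H] {A B : FuzzySet H} (f : A ⟶ B) : FuzzySet H :=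
  ⟨{ b : B.carrier // b ∈ Set.range (FuzzyHom.toFun f) }, fun b => B.μ b.val⟩

/-- The surjection of a fuzzy morphism onto its image. -/
def imageFuzRestrict {H : Type u} [Order.Frame H] {A B : FuzzySet H} (f : A ⟶ B) :
    A ⟶ imageFuz f :=
  ⟨fun a => ⟨FuzzyHom.toFun f a, ⟨a, rfl⟩⟩, fun a => f.le_mem a⟩

/-- The inclusion of the image of a fuzzy morphism. -/
def imageFuzIncl {H : Type u} [Order.Frame H] {A B : FuzzySet H} (f : A ⟶ B) :
    imageFuz f ⟶ B :=
  ⟨fun b => b.val, fun _ => le_rfl⟩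

section Aux

variable {H : Type u} [Order.Frame H]

lemma FuzzyHom.hext {A B : FuzzySet H} {f g : A ⟶ B}
    (h : FuzzyHom.toFun f = FuzzyHom.toFun g) : f = g := by
  rcases f with ⟨⟩; rcases g with ⟨⟩; cases h; rfl

lemma fuz_comp_toFun {A B C : FuzzySet H} (f : A ⟶ B) (g : B ⟶ C) :
    FuzzyHom.toFun (f ≫ g) = FuzzyHom.toFun g ∘ FuzzyHom.toFun f := rfl

lemma epi_of_surj {A B : FuzzySet H} (f : A ⟶ B)
    (hf : Function.Surjective (FuzzyHom.toFun f)) : Epi f := by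
  refine ⟨fun {Z} g h H => FuzzyHom.hext (funext fun b => ?_)⟩
  obtain ⟨a, rfl⟩ := hf b
  exact congrFun (congrArg FuzzyHom.toFun H) a

lemma surj_of_epi {A B : FuzzySet H} (f : A ⟶ B) (hf : Epi f) :
    Function.Surjective (FuzzyHom.toFun f) := by
  intro b
  classical
  let P : FuzzySet H := ⟨ULift.{u} Bool, fun _ => ⊤⟩
  let g : B ⟶ P :=
    ⟨fun b => ⟨if b ∈ Set.range (FuzzyHom.toFun f) then true else false⟩, fun _ => le_top⟩
  let h : B ⟶ P := ⟨fun _ => ⟨true⟩, fun _ => le_top⟩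
  have hcomp : f ≫ g = f ≫ h := by
    refine FuzzyHom.hext (funext fun a => ?_)
    show (⟨if _ then _ else _⟩ : ULift.{u} Bool) = ⟨true⟩
    rw [if_pos ⟨a, rfl⟩]
  have heq := hf.left_cancellation g h hcomp
  have h2 := congrArg ULift.down (congrFun (congrArg FuzzyHom.toFun heq) b)
  simp only [g, h] at h2
  have hmem : b ∈ Set.range (FuzzyHom.toFun f) := by
    by_contra h3
    rw [if_neg h3] at h2
    exact Bool.false_ne_true h2
  exact hmem

lemma mono_of_strong {X Y : FuzzySet H} (m : X ⟶ Y) (hm : IsStrongMonoLLP m) :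
    Mono m := by
  refine ⟨fun {Z} g h H => ?_⟩
  obtain ⟨k, hk, hu⟩ := hm (𝟙 Z) inferInstance g (g ≫ m) (by simp)
  exact (hu g (by simp)).trans (hu h (by simp [← H])).symm

lemma strong_of_inj {X Y : FuzzySet H} (m : X ⟶ Y)
    (hinj : Function.Injective (FuzzyHom.toFun m))
    (hmem : ∀ y : Y.carrier, y ∈ Set.range (FuzzyHom.toFun m) →
      ∀ h : H, h ≤ Y.μ y → ∃ x, FuzzyHom.toFun m x = y ∧ h ≤ X.μ x) :
    IsStrongMonoLLP m := by
  intro A B e he u v hsq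
  have hes := surj_of_epi e he
  have key : ∀ b : B.carrier, ∃ x : X.carrier,
      FuzzyHom.toFun m x = FuzzyHom.toFun v b ∧ B.μ b ≤ X.μ x := by
    intro b
    obtain ⟨a, ha⟩ := hes b
    have hr : FuzzyHom.toFun v b ∈ Set.range (FuzzyHom.toFun m) := by
      refine ⟨FuzzyHom.toFun u a, ?_⟩
      have := congrFun (congrArg FuzzyHom.toFun hsq) a
      simp only [fuz_comp_toFun, Function.comp, ha] at this
      exact this
    exact hmem _ hr _ (v.le_mem b)
  choose k hk1 hk2 using key
  refine ⟨⟨k, hk2⟩, FuzzyHom.hext (funext fun b => hk1 b), fun k' hk' => ?_⟩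
  refine FuzzyHom.hext (funext fun b => ?_)
  apply hinj
  rw [hk1 b]
  exact congrFun (congrArg FuzzyHom.toFun hk') b

lemma incl_strong {A B : FuzzySet H} (f : A ⟶ B) : IsStrongMonoLLP (imageFuzIncl f) := by
  apply strong_of_inj
  · intro x y h
    exact Subtype.ext h
  · rintro y ⟨⟨y', hy'⟩, rfl⟩ h hle
    exact ⟨⟨y', hy'⟩, rfl, hle⟩

end Aux

/-- For any frame `H`, the category `Fuz(H)` has all small products, given by cartesian
products with infimum membership; moreover epimorphisms and strong monomorphisms form
a proper factorization system, the factorization of `f` being the surjection onto its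
image (with restricted membership) followed by the strong mono inclusion. -/
theorem fuzzy_products_and_factorization (H : Type u) [Order.Frame H] :
    (∀ (I : Type u) (A : I → FuzzySet H) (C : FuzzySet H) (f : ∀ i, C ⟶ A i),
        ∃! g : C ⟶ prodFuz A, ∀ i, g ≫ prodFuzProj A i = f i) ∧
    IsProperFactorizationSystem (FuzzySet H)
      (fun _ _ f => Epi f) (fun _ _ m => IsStrongMonoLLP m) ∧
    (∀ (A B : FuzzySet H) (f : A ⟶ B),
        Function.Surjective (FuzzyHom.toFun (imageFuzRestrict f)) ∧
        IsStrongMonoLLP (imageFuzIncl f) ∧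
        imageFuzRestrict f ≫ imageFuzIncl f = f) := by
  refine ⟨?_, ?_, ?_⟩
  · intro I A C f
    refine ⟨⟨fun c i => FuzzyHom.toFun (f i) c, fun c => le_iInf fun i => (f i).le_mem c⟩,
      fun i => rfl, fun g hg => ?_⟩
    refine FuzzyHom.hext (funext fun c => funext fun i => ?_)
    exact congrFun (congrArg FuzzyHom.toFun (hg i)) c
  · refine ⟨?_, ?_, ?_, ?_, ?_, ?_, ?_, ?_⟩
    · intro X Y Z f g hf hg
      exact @epi_comp _ _ _ _ _ f hf g hg
    · -- composition of strong monos
      intro X Y Z m n hm hn A B e he u v hsq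
      obtain ⟨k₁, hk₁, hu₁⟩ := hn e he (u ≫ m) v (by rw [Category.assoc]; exact hsq)
      have hnm : Mono n := mono_of_strong n hn
      have hsq₂ : u ≫ m = e ≫ k₁ := by
        apply hnm.right_cancellation
        simp only [Category.assoc]
        rw [hk₁]
        exact hsq
      obtain ⟨k₂, hk₂, hu₂⟩ := hm e he u k₁ hsq₂
      refine ⟨k₂, ?_, fun k' hk' => ?_⟩
      · show k₂ ≫ (m ≫ n) = v
        rw [← Category.assoc, hk₂, hk₁]
      · refine hu₂ k' (hu₁ (k' ≫ m) ?_)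
        show (k' ≫ m) ≫ n = v
        rw [Category.assoc]
        exact hk'
    · intro X Y f hf
      haveI := hf
      infer_instance
    · intro X Y f hf A B e he u v hsq
      haveI := hf
      refine ⟨v ≫ inv f, by simp, fun k' hk' => ?_⟩
      rw [← hk']
      simp
    · exact fun f hf => hf
    · exact fun f hf => mono_of_strong f hf
    · exact fun e m he hm => hm e he
    · intro X Y f
      refine ⟨imageFuz f, imageFuzRestrict f, imageFuzIncl f, ?_, incl_strong f, rfl⟩
      exact epi_of_surj _ (fun b => ⟨b.2.choose, Subtype.ext b.2.choose_spec⟩)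
  · intro A B f
    exact ⟨fun b => ⟨b.2.choose, Subtype.ext b.2.choose_spec⟩, incl_strong f, rfl⟩
end

section
/- Soundness: if a Σ-fuzzy algebra A satisfies all the premises of a rule of the fuzzy sequent calculus, then it satisfies its conclusion; consequently, every model of a fuzzy theory Λ satisfies every sequent in the deductive closure Λ^⊢, and in particular if ⊢_Λ φ then A ⊨ φ for every model A of Λ. -/
universe u

/-- A signature: operation symbols with positive arities, and constant symbols. -/
structure Signature : Type (u + 1) where
  Op : Type u
  ar : Op → ℕ+
  Const : Type u

/-- Terms of the language `(S, X)`: inductively built from variables, constants and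
operation applications. -/
inductive Term (S : Signature.{u}) (X : Type u) : Type u
  | var : X → Term S X
  | const : S.Const → Term S X
  | op (f : S.Op) : (Fin (S.ar f : ℕ) → Term S X) → Term S X

/-- Formulae: equations `s ≡ t` and membership propositions `∃_l t`. -/
inductive Formula (H : Type u) (S : Signature.{u}) (X : Type u) : Type u
  | eq : Term S X → Term S X → Formula H S X
  | mem : H → Term S X → Formula H S X

/-- A sequent `Γ ⊢ φ`. -/
abbrev Sequent (H : Type u) (S : Signature.{u}) (X : Type u) : Type u :=
  Set (Formula H S X) × Formula H S X

/-- A fuzzy theory: a set of sequents. -/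
abbrev Theory (H : Type u) (S : Signature.{u}) (X : Type u) : Type u :=
  Set (Sequent H S X)

/-- Substitution of terms for variables in a term. -/
def Term.subst {S : Signature.{u}} {X : Type u} (σ : X → Term S X) :
    Term S X → Term S X
  | .var x => σ x
  | .const c => .const c
  | .op f ts => .op f fun i => (ts i).subst σ

/-- Substitution of terms for variables in a formula. -/
def Formula.subst {H : Type u} {S : Signature.{u}} {X : Type u} (σ : X → Term S X) :
    Formula H S X → Formula H S X
  | .eq s t => .eq (s.subst σ) (t.subst σ)
  | .mem l t => .mem l (t.subst σ)

/-- The fuzzy sequent calculus: `Deriv Λ Γ φ` means that the sequent `Γ ⊢ φ` belongs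
to the deductive closure `Λ^⊢` of the theory `Λ`. -/
inductive Deriv {H : Type u} [Order.Frame H] {S : Signature.{u}} {X : Type u}
    (Λ : Theory H S X) : Set (Formula H S X) → Formula H S X → Prop
  | ax {Γ φ} : (Γ, φ) ∈ Λ → Deriv Λ Γ φ
  | assum {Γ φ} : φ ∈ Γ → Deriv Λ Γ φ
  | weak {Γ Δ φ} : Deriv Λ Γ φ → Deriv Λ (Γ ∪ Δ) φ
  | cut {Γ Φ ψ} : (∀ φ ∈ Φ, Deriv Λ Γ φ) → Deriv Λ Φ ψ → Deriv Λ Γ ψ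
  | refl {Γ t} : Deriv Λ Γ (.eq t t)
  | symm {Γ s t} : Deriv Λ Γ (.eq s t) → Deriv Λ Γ (.eq t s)
  | trans {Γ s t u} : Deriv Λ Γ (.eq s t) → Deriv Λ Γ (.eq t u) → Deriv Λ Γ (.eq s u)
  | sub {Γ φ} (σ : X → Term S X) :
      Deriv Λ Γ φ → Deriv Λ (Formula.subst σ '' Γ) (φ.subst σ)
  | cong {Γ} (f : S.Op) (ts ss : Fin (S.ar f : ℕ) → Term S X) :
      (∀ i, Deriv Λ Γ (.eq (ts i) (ss i))) → Deriv Λ Γ (.eq (.op f ts) (.op f ss))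
  | inf {Γ t} : Deriv Λ Γ (.mem ⊥ t)
  | mon {Γ l t} (l' : H) : Deriv Λ Γ (.mem l t) → Deriv Λ Γ (.mem (l ⊓ l') t)
  | exp {Γ} (f : S.Op) (ts : Fin (S.ar f : ℕ) → Term S X) (ls : Fin (S.ar f : ℕ) → H) :
      (∀ i, Deriv Λ Γ (.mem (ls i) (ts i))) →
      Deriv Λ Γ (.mem (⨅ i, ls i) (.op f ts))
  | sup {Γ t} (L : Set H) :
      (∀ l ∈ L, Deriv Λ Γ (.mem l t)) → Deriv Λ Γ (.mem (sSup L) t)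
  | fn {Γ l t s} : Deriv Λ Γ (.eq t s) → Deriv Λ Γ (.mem l t) → Deriv Λ Γ (.mem l s)

/-- The deductive closure `Λ^⊢` of a theory `Λ`. -/
def deductiveClosure {H : Type u} [Order.Frame H] {S : Signature.{u}} {X : Type u}
    (Λ : Theory H S X) : Theory H S X :=
  { p | Deriv Λ p.1 p.2 }
/-- A Σ-fuzzy algebra: a fuzzy set with operations (compatible with membership
degrees) and constants. -/
structure FuzzyAlgebra (H : Type u) [Order.Frame H] (S : Signature.{u}) :
    Type (u + 1) where
  carrier : Type u
  μ : carrier → H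
  ops (f : S.Op) : (Fin (S.ar f : ℕ) → carrier) → carrier
  le_ops : ∀ (f : S.Op) (as : Fin (S.ar f : ℕ) → carrier),
    (⨅ i, μ (as i)) ≤ μ (ops f as)
  consts : S.Const → carrier

/-- Evaluation of a term in a Σ-fuzzy algebra under an assignment of the variables. -/
def FuzzyAlgebra.eval {H : Type u} [Order.Frame H] {S : Signature.{u}} {X : Type u}
    (A : FuzzyAlgebra H S) (ι : X → A.carrier) : Term S X → A.carrier
  | .var x => ι x
  | .const c => A.consts c
  | .op f ts => A.ops f fun i => A.eval ι (ts i)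

/-- Satisfaction of a formula in a Σ-fuzzy algebra under an assignment. -/
def FuzzyAlgebra.Sat {H : Type u} [Order.Frame H] {S : Signature.{u}} {X : Type u}
    (A : FuzzyAlgebra H S) (ι : X → A.carrier) : Formula H S X → Prop
  | .eq s t => A.eval ι s = A.eval ι t
  | .mem l t => l ≤ A.μ (A.eval ι t)

/-- Satisfaction of a sequent `Γ ⊢ φ` (with respect to all assignments). -/
def FuzzyAlgebra.SatSeq {H : Type u} [Order.Frame H] {S : Signature.{u}} {X : Type u}
    (A : FuzzyAlgebra H S) (Γ : Set (Formula H S X)) (φ : Formula H S X) : Prop :=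
  ∀ ι : X → A.carrier, (∀ ψ ∈ Γ, A.Sat ι ψ) → A.Sat ι φ

/-- A model of a fuzzy theory: an algebra satisfying all its sequents. -/
def FuzzyAlgebra.IsModel {H : Type u} [Order.Frame H] {S : Signature.{u}} {X : Type u}
    (A : FuzzyAlgebra H S) (Λ : Theory H S X) : Prop :=
  ∀ p ∈ Λ, A.SatSeq p.1 p.2

/-- A morphism of Σ-fuzzy algebras: a fuzzy-set morphism commuting with all
operations and constants. -/
structure FuzzyAlgHom {H : Type u} [Order.Frame H] {S : Signature.{u}}
    (A B : FuzzyAlgebra H S) : Type u where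
  toFun : A.carrier → B.carrier
  le_mem : ∀ x, A.μ x ≤ B.μ (toFun x)
  map_ops : ∀ (f : S.Op) (as : Fin (S.ar f : ℕ) → A.carrier),
    toFun (A.ops f as) = B.ops f fun i => toFun (as i)
  map_consts : ∀ c, toFun (A.consts c) = B.consts c

namespace FuzzyAlgebra

variable {H : Type u} [Order.Frame H] {S : Signature.{u}} {X : Type u} (A : FuzzyAlgebra H S)

theorem eval_subst (ι : X → A.carrier) (σ : X → Term S X) :
    ∀ t : Term S X, A.eval ι (t.subst σ) = A.eval (fun x => A.eval ι (σ x)) t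
  | .var _ => rfl
  | .const _ => rfl
  | .op f ts => congrArg (A.ops f) (funext fun i => eval_subst ι σ (ts i))

theorem sat_subst (ι : X → A.carrier) (σ : X → Term S X) (φ : Formula H S X) :
    A.Sat ι (φ.subst σ) ↔ A.Sat (fun x => A.eval ι (σ x)) φ := by
  cases φ <;> simp only [Formula.subst, Sat, eval_subst]

theorem SatSeq.subst {A : FuzzyAlgebra H S} {Γ : Set (Formula H S X)} {φ : Formula H S X}
    (h : A.SatSeq Γ φ) (σ : X → Term S X) :
    A.SatSeq (Formula.subst σ '' Γ) (φ.subst σ) := by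
  intro ι hΓ
  rw [sat_subst]
  exact h _ fun ψ hψ => (A.sat_subst ι σ ψ).mp (hΓ _ ⟨ψ, hψ, rfl⟩)

variable {A}

theorem satSeq_of_deriv {Λ : Theory H S X} (hA : A.IsModel Λ) {Γ : Set (Formula H S X)}
    {φ : Formula H S X} (h : Deriv Λ Γ φ) : A.SatSeq Γ φ := by
  induction h with
  | ax h => exact hA _ h
  | assum h => exact fun _ hΓ => hΓ _ h
  | weak _ ih => exact fun ι hΓ => ih ι fun ψ hψ => hΓ ψ (Or.inl hψ)
  | cut _ _ ihΦ ih => exact fun ι hΓ => ih ι fun ψ hψ => ihΦ ψ hψ ι hΓ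
  | refl => exact fun _ _ => rfl
  | symm _ ih => exact fun ι hΓ => (ih ι hΓ).symm
  | trans _ _ ih₁ ih₂ => exact fun ι hΓ => (ih₁ ι hΓ).trans (ih₂ ι hΓ)
  | sub σ _ ih => exact ih.subst σ
  | cong f _ _ _ ih => exact fun ι hΓ => congrArg (A.ops f) (funext fun i => ih i ι hΓ)
  | inf => exact fun _ _ => bot_le
  | mon _ _ ih => exact fun ι hΓ => inf_le_left.trans (ih ι hΓ)
  | exp f _ _ _ ih => exact fun ι hΓ => (iInf_mono fun i => ih i ι hΓ).trans (A.le_ops f _)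
  | sup _ _ ih => exact fun ι hΓ => sSup_le fun l hl => ih l hl ι hΓ
  | fn _ _ ihEq ihMem =>
      intro ι hΓ
      show _ ≤ A.μ (A.eval ι _)
      exact ihEq ι hΓ ▸ ihMem ι hΓ

end FuzzyAlgebra

/-- Soundness: every model of a fuzzy theory `Λ` satisfies every sequent in the
deductive closure `Λ^⊢`; in particular if `⊢_Λ φ` then `A ⊨ φ` for every model `A`. -/
theorem soundness {H : Type u} [Order.Frame H] {S : Signature.{u}} {X : Type u}
    (Λ : Theory H S X) (A : FuzzyAlgebra H S) (hA : A.IsModel Λ) :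
    (∀ (Γ : Set (Formula H S X)) (φ : Formula H S X),
        Deriv Λ Γ φ → A.SatSeq Γ φ) ∧
    (∀ φ : Formula H S X, Deriv Λ ∅ φ → ∀ ι : X → A.carrier, A.Sat ι φ) :=
  ⟨fun _ _ => FuzzyAlgebra.satSeq_of_deriv hA,
    fun _ h ι => FuzzyAlgebra.satSeq_of_deriv hA h ι fun _ hψ => hψ.elim⟩
end

section
/- Term model: for a fuzzy theory Λ on a language L = (Σ, X), define the relation t ~_Λ s iff ⊢_Λ t ≡ s (an equivalence relation), let T_Λ be the quotient of Terms(L) by ~_Λ with membership μ_Λ([t]) = sup{ l ∈ H : ⊢_Λ ∃_l t } and with operations induced syntactically, and let ι_can : X → T_Λ send x to [x]. Then T_Λ is a Σ-fuzzy algebra which is a model of Λ, and for every formula φ the following are equivalent: (a) T_Λ ⊨ φ; (b) T_Λ ⊨_{ι_can} φ; (c) ⊢_Λ φ. -/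
universe u

/-!
Every assignment into `T_Λ` has the form `x ↦ [σ x]` for a substitution `σ`, and evaluating a
term under it gives `[t.subst σ]`; so satisfaction in `T_Λ` is derivability of a substitution
instance. The supremum rule makes `μ_Λ [t]` itself a derivable degree of `t`, whence
`l ≤ μ_Λ [t]` iff `⊢_Λ ∃_l t` by monotonicity, and `T_Λ` satisfies every derivable sequent by
substitution and cut.
-/

theorem Term.subst_var {S : Signature.{u}} {X : Type u} (t : Term S X) : t.subst .var = t := by
  induction t with
  | var x => rfl
  | const c => rfl
  | op f ts ih => simp only [Term.subst, ih]

theorem Formula.subst_var {H : Type u} {S : Signature.{u}} {X : Type u}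
    (φ : Formula H S X) : φ.subst .var = φ := by
  cases φ <;> simp only [Formula.subst, Term.subst_var]

theorem Deriv.subst_of_premises {H : Type u} [Order.Frame H] {S : Signature.{u}} {X : Type u}
    {Λ : Theory H S X} {Γ : Set (Formula H S X)} {φ : Formula H S X} (h : Deriv Λ Γ φ)
    (σ : X → Term S X) (hΓ : ∀ ψ ∈ Γ, Deriv Λ ∅ (ψ.subst σ)) : Deriv Λ ∅ (φ.subst σ) :=
  Deriv.cut (by rintro _ ⟨ψ, hψ, rfl⟩; exact hΓ ψ hψ) (Deriv.sub σ h)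

namespace TermModel

variable {H : Type u} [Order.Frame H] {S : Signature.{u}} {X : Type u} (Λ : Theory H S X)

def setoid : Setoid (Term S X) where
  r t s := Deriv Λ ∅ (.eq t s)
  iseqv := ⟨fun _ => Deriv.refl, Deriv.symm, Deriv.trans⟩

def degree (t : Term S X) : H := sSup { l : H | Deriv Λ ∅ (.mem l t) }

theorem deriv_mem_degree (t : Term S X) : Deriv Λ ∅ (.mem (degree Λ t) t) :=
  Deriv.sup _ fun _ hl => hl

theorem deriv_mem_iff_le_degree {l : H} {t : Term S X} :
    Deriv Λ ∅ (.mem l t) ↔ l ≤ degree Λ t := by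
  refine ⟨fun h => le_sSup h, fun hl => ?_⟩
  simpa only [inf_eq_right.mpr hl] using Deriv.mon l (deriv_mem_degree Λ t)

theorem degree_congr {t s : Term S X} (h : Deriv Λ ∅ (.eq t s)) : degree Λ t = degree Λ s :=
  congrArg sSup <| Set.ext fun _ => ⟨Deriv.fn h, Deriv.fn (Deriv.symm h)⟩

theorem iInf_degree_le_degree_op (f : S.Op) (ts : Fin (S.ar f : ℕ) → Term S X) :
    ⨅ i, degree Λ (ts i) ≤ degree Λ (.op f ts) :=
  le_sSup (Deriv.exp f ts _ fun i => deriv_mem_degree Λ (ts i))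

def mk (t : Term S X) : Quotient (setoid Λ) := Quotient.mk (setoid Λ) t

theorem mk_eq_mk_iff {t s : Term S X} : mk Λ t = mk Λ s ↔ Deriv Λ ∅ (.eq t s) := Quotient.eq

theorem mk_out (a : Quotient (setoid Λ)) : mk Λ a.out = a := Quotient.out_eq a

theorem deriv_out_mk (t : Term S X) : Deriv Λ ∅ (.eq (mk Λ t).out t) :=
  (mk_eq_mk_iff Λ).mp (mk_out Λ _)

noncomputable def algebra : FuzzyAlgebra H S where
  carrier := Quotient (setoid Λ)
  μ a := degree Λ a.out
  ops f as := mk Λ (.op f fun i => (as i).out)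
  consts c := mk Λ (.const c)
  le_ops f as := by
    simpa only [degree_congr Λ (deriv_out_mk Λ _)] using iInf_degree_le_degree_op Λ f _

theorem μ_mk (t : Term S X) : (algebra Λ).μ (mk Λ t) = degree Λ t :=
  degree_congr Λ (deriv_out_mk Λ t)

theorem ops_mk (f : S.Op) (ts : Fin (S.ar f : ℕ) → Term S X) :
    (algebra Λ).ops f (fun i => mk Λ (ts i)) = mk Λ (.op f ts) :=
  (mk_eq_mk_iff Λ).mpr (Deriv.cong f _ _ fun i => deriv_out_mk Λ (ts i))

theorem eval_mk_comp (σ : X → Term S X) (t : Term S X) :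
    (algebra Λ).eval (fun x => mk Λ (σ x)) t = mk Λ (t.subst σ) := by
  induction t with
  | var x => rfl
  | const c => rfl
  | op f ts ih =>
      simp only [FuzzyAlgebra.eval, Term.subst, ih]
      exact ops_mk Λ f _

theorem sat_mk_comp_iff (σ : X → Term S X) (φ : Formula H S X) :
    (algebra Λ).Sat (fun x => mk Λ (σ x)) φ ↔ Deriv Λ ∅ (φ.subst σ) := by
  cases φ with
  | eq s t =>
      simp only [FuzzyAlgebra.Sat, Formula.subst, eval_mk_comp]
      exact mk_eq_mk_iff Λ
  | mem l t =>
      simp only [FuzzyAlgebra.Sat, Formula.subst, eval_mk_comp, μ_mk]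
      exact (deriv_mem_iff_le_degree Λ).symm

theorem sat_mk_var_iff (φ : Formula H S X) :
    (algebra Λ).Sat (fun x => mk Λ (.var x)) φ ↔ Deriv Λ ∅ φ := by
  simpa only [Formula.subst_var] using sat_mk_comp_iff Λ .var φ

theorem satSeq_of_deriv {Γ : Set (Formula H S X)} {φ : Formula H S X} (h : Deriv Λ Γ φ) :
    (algebra Λ).SatSeq Γ φ := by
  intro ι hΓ
  have hι : ι = fun x => mk Λ (ι x).out := funext fun x => (mk_out Λ (ι x)).symm
  rw [hι] at hΓ ⊢
  exact (sat_mk_comp_iff Λ _ φ).mpr <|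
    h.subst_of_premises _ fun ψ hψ => (sat_mk_comp_iff Λ _ ψ).mp (hΓ ψ hψ)

end TermModel

open TermModel in
/-- Term model: the relation `t ~_Λ s` iff `⊢_Λ t ≡ s` is an equivalence relation,
and there is a Σ-fuzzy algebra `T_Λ` whose carrier is the quotient of the terms by
`~_Λ`, with membership `μ_Λ [t] = sup { l : ⊢_Λ ∃_l t }` and syntactic operations
and constants, which is a model of `Λ`; moreover for every formula `φ` the
conditions `T_Λ ⊨ φ`, `T_Λ ⊨_{ι_can} φ` (where `ι_can x = [x]`) and `⊢_Λ φ` are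
all equivalent. -/
theorem term_model {H : Type u} [Order.Frame H] {S : Signature.{u}} {X : Type u}
    (Λ : Theory H S X) :
    Equivalence (fun t s : Term S X => Deriv Λ ∅ (.eq t s)) ∧
    ∃ (T : FuzzyAlgebra H S) (q : Term S X → T.carrier),
      Function.Surjective q ∧
      (∀ t s : Term S X, q t = q s ↔ Deriv Λ ∅ (.eq t s)) ∧
      (∀ t : Term S X, T.μ (q t) = sSup { l : H | Deriv Λ ∅ (.mem l t) }) ∧
      (∀ c : S.Const, T.consts c = q (.const c)) ∧
      (∀ (f : S.Op) (ts : Fin (S.ar f : ℕ) → Term S X),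
          T.ops f (fun i => q (ts i)) = q (.op f ts)) ∧
      T.IsModel Λ ∧
      (∀ φ : Formula H S X,
        ((∀ ι : X → T.carrier, T.Sat ι φ) ↔ T.Sat (fun x => q (.var x)) φ) ∧
        (T.Sat (fun x => q (.var x)) φ ↔ Deriv Λ ∅ φ)) := by
  refine ⟨(setoid Λ).iseqv, algebra Λ, mk Λ, Quotient.mk_surjective, fun _ _ => mk_eq_mk_iff Λ,
    μ_mk Λ, fun _ => rfl, ops_mk Λ, fun p hp => satSeq_of_deriv Λ (Deriv.ax hp), fun φ => ?_⟩
  refine ⟨⟨fun h => h _, fun h ι => ?_⟩, sat_mk_var_iff Λ φ⟩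
  exact satSeq_of_deriv Λ ((sat_mk_var_iff Λ φ).mp h) ι fun _ hψ => hψ.elim
end

section
/- Let Λ be a fuzzy theory on L = (Σ, X) and (M, μ_M) a fuzzy set. Form the extended signature Σ[M, μ_M] with the elements of M added as constants, and the extended theory Λ[M, μ_M] = Λ ∪ { ∅ ⊢ ∃_l m : m ∈ M, l ∈ H, l ≤ μ_M(m) }. Then (1) the map m ↦ [m] is a fuzzy morphism (M, μ_M) → T_{Λ[M,μ_M]} into the term model; (2) every element of the subalgebra of T_{Λ[M,μ_M]} generated by this map has a representative term without variables; and (3) this generated subalgebra is an initial object of the category of models of Λ[M, μ_M]. -/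
universe u

/-- The underlying fuzzy set of a Σ-fuzzy algebra. -/
def FuzzyAlgebra.toFuzzySet {H : Type u} [Order.Frame H] {S : Signature.{u}}
    (A : FuzzyAlgebra H S) : FuzzySet H :=
  ⟨A.carrier, A.μ⟩
/-- The subset of a Σ-fuzzy algebra generated by a subset `s`: the smallest subset
containing `s` and all constants and closed under all operations. -/
inductive GenSet {H : Type u} [Order.Frame H] {S : Signature.{u}}
    (A : FuzzyAlgebra H S) (s : Set A.carrier) : A.carrier → Prop
  | base {a} : a ∈ s → GenSet A s a
  | const (c : S.Const) : GenSet A s (A.consts c)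
  | op (f : S.Op) (as : Fin (S.ar f : ℕ) → A.carrier) :
      (∀ i, GenSet A s (as i)) → GenSet A s (A.ops f as)

/-- The subalgebra of a Σ-fuzzy algebra generated by a subset, with the restricted
membership function. -/
def genSub {H : Type u} [Order.Frame H] {S : Signature.{u}}
    (A : FuzzyAlgebra H S) (s : Set A.carrier) : FuzzyAlgebra H S where
  carrier := { a : A.carrier // GenSet A s a }
  μ a := A.μ a.val
  ops f as := ⟨A.ops f fun i => (as i).val, GenSet.op f _ fun i => (as i).property⟩
  le_ops f as := A.le_ops f fun i => (as i).val
  consts c := ⟨A.consts c, GenSet.const c⟩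

/-- The inclusion of a generated subalgebra. -/
def genSubIncl {H : Type u} [Order.Frame H] {S : Signature.{u}}
    (A : FuzzyAlgebra H S) (s : Set A.carrier) : FuzzyAlgHom (genSub A s) A :=
  ⟨Subtype.val, fun _ => le_rfl, fun _ _ => rfl, fun _ => rfl⟩

/-- The signature `Σ[M]` obtained by adding the elements of `M` as constants. -/
def Signature.addConsts (S : Signature.{u}) (M : Type u) : Signature.{u} :=
  ⟨S.Op, S.ar, S.Const ⊕ M⟩

/-- The inclusion of terms over `Σ` into terms over `Σ[M]`. -/
def Term.extendConst {S : Signature.{u}} {M X : Type u} :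
    Term S X → Term (S.addConsts M) X
  | .var x => .var x
  | .const c => .const (Sum.inl c)
  | .op f ts => .op f fun i => (ts i).extendConst

/-- The inclusion of formulae over `Σ` into formulae over `Σ[M]`. -/
def Formula.extendConst {H : Type u} {S : Signature.{u}} {M X : Type u} :
    Formula H S X → Formula H (S.addConsts M) X
  | .eq s t => .eq s.extendConst t.extendConst
  | .mem l t => .mem l t.extendConst

/-- The extended theory `Λ[M, μ_M]` over `Σ[M]`: the (transported) theory `Λ`
together with the axioms `∅ ⊢ ∃_l m` for all `m ∈ M` and `l ≤ μ_M m`. -/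
def extendedTheory {H : Type u} [Order.Frame H] {S : Signature.{u}} {X : Type u}
    (Λ : Theory H S X) (M : FuzzySet H) : Theory H (S.addConsts M.carrier) X :=
  (fun p : Sequent H S X => ((Formula.extendConst '' p.1 : Set _), p.2.extendConst)) '' Λ
    ∪ { p | p.1 = ∅ ∧ ∃ (m : M.carrier) (l : H),
          l ≤ M.μ m ∧ p.2 = .mem l (.const (Sum.inr m)) }

/-- Variable-free terms. -/
inductive Term.VarFree {S : Signature.{u}} {X : Type u} : Term S X → Prop
  | const (c : S.Const) : VarFree (.const c)
  | op (f : S.Op) (ts : Fin (S.ar f : ℕ) → Term S X) :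
      (∀ i, VarFree (ts i)) → VarFree (.op f ts)

namespace IP

variable {H : Type u} [Order.Frame H] {S : Signature.{u}} {X : Type u}

/-- The setoid of provable equality. -/
def termSetoid (Θ : Theory H S X) : Setoid (Term S X) :=
  ⟨fun t s => Deriv Θ ∅ (.eq t s),
   fun _ => .refl, fun h => .symm h, fun h1 h2 => .trans h1 h2⟩

def memSet (Θ : Theory H S X) (t : Term S X) : Set H :=
  { l | Deriv Θ ∅ (.mem l t) }

lemma memSet_self (Θ : Theory H S X) (t : Term S X) :
    Deriv Θ ∅ (.mem (sSup (memSet Θ t)) t) :=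
  Deriv.sup _ (fun _ hl => hl)

lemma mem_of_le {Θ : Theory H S X} {l l' : H} {t} (hle : l ≤ l')
    (h : Deriv Θ ∅ (.mem l' t)) : Deriv Θ ∅ (.mem l t) := by
  have := Deriv.mon l h
  rwa [inf_eq_right.mpr hle] at this

lemma memSet_congr {Θ : Theory H S X} {t s} (h : Deriv Θ ∅ (.eq t s)) :
    memSet Θ t = memSet Θ s := by
  ext l
  exact ⟨fun hm => .fn h hm, fun hm => .fn (.symm h) hm⟩

/-- The term model of a theory. -/
noncomputable def termModel (Θ : Theory H S X) : FuzzyAlgebra H S where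
  carrier := Quotient (termSetoid Θ)
  μ := Quotient.lift (fun t => sSup (memSet Θ t))
    (fun _ _ h => congrArg sSup (memSet_congr h))
  ops f as := Quotient.mk _ (.op f fun i => (as i).out)
  le_ops f as := by
    have h : ∀ i, Deriv Θ ∅ (.mem (sSup (memSet Θ ((as i).out))) ((as i).out)) :=
      fun i => memSet_self Θ _
    have hd := Deriv.exp f (fun i => (as i).out) _ h
    have hle : (⨅ i, sSup (memSet Θ ((as i).out))) ≤
        sSup (memSet Θ (.op f fun i => (as i).out)) := le_sSup hd
    refine le_trans (le_of_eq ?_) hle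
    refine iInf_congr fun i => ?_
    conv_lhs => rw [← Quotient.out_eq (as i)]
    rfl
  consts c := Quotient.mk _ (.const c)

def qm (Θ : Theory H S X) : Term S X → (termModel Θ).carrier := Quotient.mk _

lemma qm_surj (Θ : Theory H S X) : Function.Surjective (qm Θ) :=
  fun a => Quotient.exists_rep a

lemma qm_eq (Θ : Theory H S X) (t s : Term S X) :
    qm Θ t = qm Θ s ↔ Deriv Θ ∅ (.eq t s) := by
  exact ⟨fun h => Quotient.exact h, fun h => Quotient.sound h⟩

lemma ops_qm (Θ : Theory H S X) (f : S.Op) (ts : Fin (S.ar f : ℕ) → Term S X) :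
    (termModel Θ).ops f (fun i => qm Θ (ts i)) = qm Θ (.op f ts) := by
  refine Quotient.sound (Deriv.cong f _ _ fun i => ?_)
  exact Quotient.exact (Quotient.out_eq (qm Θ (ts i)))

lemma mem_iff (Θ : Theory H S X) (l : H) (t : Term S X) :
    Deriv Θ ∅ (.mem l t) ↔ l ≤ (termModel Θ).μ (qm Θ t) := by
  exact ⟨fun h => le_sSup h, fun h => mem_of_le h (memSet_self Θ t)⟩

lemma eval_subst (B : FuzzyAlgebra H S) (ι : X → B.carrier) (σ : X → Term S X)
    (t : Term S X) :
    B.eval ι (t.subst σ) = B.eval (fun x => B.eval ι (σ x)) t := by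
  induction t with
  | var x => rfl
  | const c => rfl
  | op f ts ih =>
    show B.ops f _ = B.ops f _
    exact congrArg _ (funext ih)

lemma sat_subst (B : FuzzyAlgebra H S) (ι : X → B.carrier) (σ : X → Term S X)
    (φ : Formula H S X) :
    B.Sat ι (φ.subst σ) ↔ B.Sat (fun x => B.eval ι (σ x)) φ := by
  cases φ <;> simp [Formula.subst, FuzzyAlgebra.Sat, eval_subst]

theorem soundness {Θ : Theory H S X} {B : FuzzyAlgebra H S} (hB : B.IsModel Θ)
    {Γ φ} (h : Deriv Θ Γ φ) : B.SatSeq Γ φ := by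
  induction h with
  | ax hp => exact hB _ hp
  | assum hφ => exact fun ι hΓ => hΓ _ hφ
  | weak _ ih => exact fun ι hΓ => ih ι (fun ψ hψ => hΓ ψ (Set.mem_union_left _ hψ))
  | cut _ _ ih1 ih2 => exact fun ι hΓ => ih2 ι (fun ψ hψ => ih1 ψ hψ ι hΓ)
  | refl => exact fun ι _ => rfl
  | symm _ ih => exact fun ι hΓ => (ih ι hΓ).symm
  | trans _ _ ih1 ih2 => exact fun ι hΓ => (ih1 ι hΓ).trans (ih2 ι hΓ)
  | sub σ _ ih =>
    intro ι hΓ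
    rw [sat_subst]
    exact ih _ (fun ψ hψ => (sat_subst B ι σ ψ).mp (hΓ _ (Set.mem_image_of_mem _ hψ)))
  | cong f ts ss _ ih =>
    intro ι hΓ
    show B.ops f _ = B.ops f _
    exact congrArg _ (funext fun i => ih i ι hΓ)
  | inf => exact fun ι _ => bot_le
  | mon l' _ ih => exact fun ι hΓ => inf_le_left.trans (ih ι hΓ)
  | exp f ts ls _ ih =>
    intro ι hΓ
    exact le_trans (iInf_mono fun i => ih i ι hΓ) (B.le_ops f _)
  | sup L _ ih => exact fun ι hΓ => sSup_le (fun l hl => ih l hl ι hΓ)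
  | fn _ _ ih1 ih2 =>
    intro ι hΓ
    have h1 := ih1 ι hΓ
    have h2 := ih2 ι hΓ
    show _ ≤ B.μ _
    rw [← h1]
    exact h2

lemma eval_qm (Θ : Theory H S X) (ι : X → (termModel Θ).carrier) (t : Term S X) :
    (termModel Θ).eval ι t = qm Θ (t.subst (fun x => (ι x).out)) := by
  induction t with
  | var x => exact (Quotient.out_eq (ι x)).symm
  | const c => rfl
  | op f ts ih =>
    show (termModel Θ).ops f _ = _
    rw [show (fun i => (termModel Θ).eval ι (ts i)) =
        (fun i => qm Θ ((ts i).subst fun x => (ι x).out)) from funext ih, ops_qm]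
    rfl

lemma sat_qm (Θ : Theory H S X) (ι : X → (termModel Θ).carrier) (φ : Formula H S X) :
    (termModel Θ).Sat ι φ ↔ Deriv Θ ∅ (φ.subst (fun x => (ι x).out)) := by
  cases φ with
  | eq s t =>
    show _ = _ ↔ _
    rw [eval_qm, eval_qm]
    exact qm_eq Θ _ _
  | mem l t =>
    show l ≤ _ ↔ _
    rw [eval_qm]
    exact (mem_iff Θ l _).symm

theorem termModel_isModel (Θ : Theory H S X) : (termModel Θ).IsModel Θ := by
  intro p hp ι hΓ
  rw [sat_qm]
  refine Deriv.cut (Φ := Formula.subst (fun x => (ι x).out) '' p.1) ?_ (.sub _ (.ax hp))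
  rintro φ ⟨ψ, hψ, rfl⟩
  exact (sat_qm Θ ι ψ).mp (hΓ ψ hψ)

lemma homEval {A B : FuzzyAlgebra H S} (h : FuzzyAlgHom A B) (ι : X → A.carrier)
    (t : Term S X) : h.toFun (A.eval ι t) = B.eval (fun x => h.toFun (ι x)) t := by
  induction t with
  | var x => rfl
  | const c => exact h.map_consts c
  | op f ts ih =>
    show h.toFun (A.ops f _) = B.ops f _
    rw [h.map_ops]
    exact congrArg _ (funext ih)

lemma genSub_sat (A : FuzzyAlgebra H S) (s : Set A.carrier)
    (ι : X → (genSub A s).carrier) (φ : Formula H S X) :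
    (genSub A s).Sat ι φ ↔ A.Sat (fun x => (ι x).val) φ := by
  have he : ∀ t : Term S X, ((genSub A s).eval ι t).val = A.eval (fun x => (ι x).val) t :=
    fun t => homEval (genSubIncl A s) ι t
  cases φ with
  | eq a b =>
    show _ = _ ↔ _ = _
    rw [← he, ← he]
    exact ⟨fun h => congrArg Subtype.val h, fun h => Subtype.ext h⟩
  | mem l t =>
    show l ≤ A.μ ((genSub A s).eval ι t).val ↔ l ≤ A.μ (A.eval (fun x => (ι x).val) t)
    rw [he t]

lemma genSub_isModel {Θ : Theory H S X} {A : FuzzyAlgebra H S} (s : Set A.carrier)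
    (h : A.IsModel Θ) : (genSub A s).IsModel Θ := by
  intro p hp ι hΓ
  rw [genSub_sat]
  exact h p hp _ (fun ψ hψ => (genSub_sat A s ι ψ).mp (hΓ ψ hψ))

open Classical in
/-- Partial evaluation of (intended: variable-free) terms in an algebra. -/
noncomputable def evalO (B : FuzzyAlgebra H S) : Term S X → Option B.carrier
  | .var _ => none
  | .const c => some (B.consts c)
  | .op f ts =>
    if h : ∀ i, (evalO B (ts i)).isSome then
      some (B.ops f fun i => (evalO B (ts i)).get (h i))
    else none

lemma evalO_isSome {B : FuzzyAlgebra H S} {t : Term S X} (h : t.VarFree) :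
    (evalO B t).isSome := by
  induction h with
  | const c => rfl
  | op f ts h ih => rw [evalO, dif_pos ih]; rfl

lemma evalO_eval {B : FuzzyAlgebra H S} {t : Term S X} {b : B.carrier}
    (h : evalO B t = some b) (ι : X → B.carrier) : B.eval ι t = b := by
  induction t generalizing b with
  | var x => simp [evalO] at h
  | const c =>
    rw [evalO] at h
    injection h with h
  | op f ts ih =>
    rw [evalO] at h
    split_ifs at h with hs
    injection h with h
    rw [← h]
    show B.ops f _ = B.ops f _
    exact congrArg _ (funext fun i => ih i (Option.some_get (hs i)).symm)

lemma evalO_congr {Θ : Theory H S X} {B : FuzzyAlgebra H S} (hB : B.IsModel Θ)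
    {t s : Term S X} (ht : t.VarFree) (hs : s.VarFree)
    (h : Deriv Θ ∅ (.eq t s)) : evalO B t = evalO B s := by
  obtain ⟨b, hb⟩ := Option.isSome_iff_exists.mp (evalO_isSome (B := B) ht)
  obtain ⟨c, hc⟩ := Option.isSome_iff_exists.mp (evalO_isSome (B := B) hs)
  have heq : B.eval (fun _ => b) t = B.eval (fun _ => b) s :=
    soundness hB h _ (fun ψ hψ => absurd hψ (Set.notMem_empty ψ))
  rw [evalO_eval hb, evalO_eval hc] at heq
  rw [hb, hc, heq]

lemma vf_gen {Θ : Theory H S X} (s0 : Set (termModel Θ).carrier) {t : Term S X}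
    (h : t.VarFree) : GenSet (termModel Θ) s0 (qm Θ t) := by
  induction h with
  | const c => exact GenSet.const c
  | op f ts h ih =>
    rw [← ops_qm]
    exact GenSet.op f _ ih

lemma hom_ext {A B : FuzzyAlgebra H S} {h₁ h₂ : FuzzyAlgHom A B}
    (h : h₁.toFun = h₂.toFun) : h₁ = h₂ := by
  cases h₁; cases h₂; cases h; rfl

end IP


/-- For the term model `T` of the extended theory `Λ[M, μ_M]` (with quotient map `q`):
(1) `m ↦ [m]` is a fuzzy morphism `(M, μ_M) → T`; (2) every element of the subalgebra
of `T` generated by this map has a variable-free representative; and (3) this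
generated subalgebra is an initial object of the category of models of `Λ[M, μ_M]`. -/
theorem initial_model_of_extended_theory {H : Type u} [Order.Frame H]
    {S : Signature.{u}} {X : Type u} (Λ : Theory H S X) (M : FuzzySet H) :
    ∃ (T : FuzzyAlgebra H (S.addConsts M.carrier))
      (q : Term (S.addConsts M.carrier) X → T.carrier),
      -- `T` is the term model of `Λ[M, μ_M]`:
      Function.Surjective q ∧
      (∀ t s, q t = q s ↔ Deriv (extendedTheory Λ M) ∅ (.eq t s)) ∧
      (∀ t, T.μ (q t) = sSup { l : H | Deriv (extendedTheory Λ M) ∅ (.mem l t) }) ∧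
      (∀ c, T.consts c = q (.const c)) ∧
      (∀ (f : (S.addConsts M.carrier).Op)
          (ts : Fin ((S.addConsts M.carrier).ar f : ℕ) → Term (S.addConsts M.carrier) X),
          T.ops f (fun i => q (ts i)) = q (.op f ts)) ∧
      -- (1) `m ↦ [m]` is a fuzzy morphism:
      (∀ m : M.carrier, M.μ m ≤ T.μ (q (.const (Sum.inr m)))) ∧
      -- (2) every element of the generated subalgebra has a variable-free representative:
      (∀ a : T.carrier,
          GenSet T (Set.range fun m : M.carrier => q (.const (Sum.inr m))) a →
          ∃ t : Term (S.addConsts M.carrier) X, t.VarFree ∧ q t = a) ∧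
      -- (3) the generated subalgebra is initial in `Mod(Λ[M, μ_M])`:
      ((genSub T (Set.range fun m : M.carrier => q (.const (Sum.inr m)))).IsModel
          (extendedTheory Λ M) ∧
        ∀ B : FuzzyAlgebra H (S.addConsts M.carrier), B.IsModel (extendedTheory Λ M) →
          ∃ h : FuzzyAlgHom
              (genSub T (Set.range fun m : M.carrier => q (.const (Sum.inr m)))) B,
            ∀ h' : FuzzyAlgHom
              (genSub T (Set.range fun m : M.carrier => q (.const (Sum.inr m)))) B,
              h' = h) := by
  classical
  set Θ := extendedTheory Λ M with hΘ
  let T := IP.termModel Θ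
  let q := IP.qm Θ
  let s0 : Set T.carrier := Set.range fun m : M.carrier => q (.const (Sum.inr m))
  have hrep : ∀ a : T.carrier, GenSet T s0 a →
      ∃ t : Term (S.addConsts M.carrier) X, t.VarFree ∧ q t = a := by
    intro a ha
    induction ha with
    | base h =>
      obtain ⟨m, rfl⟩ := h
      exact ⟨.const (Sum.inr m), .const _, rfl⟩
    | const c => exact ⟨.const c, .const c, rfl⟩
    | op f as _ ih =>
      choose ts hvf hq using ih
      refine ⟨.op f ts, .op f ts hvf, ?_⟩
      exact (IP.ops_qm Θ f ts).symm.trans (congrArg (T.ops f) (funext hq))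
  have hmodel : (genSub T s0).IsModel Θ := IP.genSub_isModel s0 (IP.termModel_isModel Θ)
  have hinit : ∀ B : FuzzyAlgebra H (S.addConsts M.carrier), B.IsModel Θ →
      ∃ h : FuzzyAlgHom (genSub T s0) B, ∀ h' : FuzzyAlgHom (genSub T s0) B, h' = h := by
    intro B hB
    choose rep hvf hq using fun a : (genSub T s0).carrier => hrep a.val a.property
    let g : (genSub T s0).carrier → B.carrier :=
      fun a => (IP.evalO B (rep a)).get (IP.evalO_isSome (hvf a))
    have hg : ∀ a, IP.evalO B (rep a) = some (g a) := fun a => (Option.some_get _).symm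
    have key : ∀ (a : (genSub T s0).carrier) (t : Term (S.addConsts M.carrier) X),
        t.VarFree → q t = a.val → IP.evalO B t = some (g a) := by
      intro a t ht hqt
      have he : Deriv Θ ∅ (.eq t (rep a)) := (IP.qm_eq Θ t (rep a)).mp (hqt.trans (hq a).symm)
      rw [IP.evalO_congr hB ht (hvf a) he, hg]
    have hconsts : ∀ c, g ((genSub T s0).consts c) = B.consts c := by
      intro c
      have h1 := key ((genSub T s0).consts c) (.const c) (.const c) rfl
      rw [IP.evalO] at h1
      exact (Option.some.inj h1).symm
    have hops : ∀ (f : (S.addConsts M.carrier).Op)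
        (as : Fin ((S.addConsts M.carrier).ar f : ℕ) → (genSub T s0).carrier),
        g ((genSub T s0).ops f as) = B.ops f fun i => g (as i) := by
      intro f as
      have ht : (Term.op f fun i => rep (as i)).VarFree := .op _ _ fun i => hvf (as i)
      have hqa : q (.op f fun i => rep (as i)) = ((genSub T s0).ops f as).val := by
        show q _ = T.ops f fun i => (as i).val
        exact (IP.ops_qm Θ f fun i => rep (as i)).symm.trans
          (congrArg (T.ops f) (funext fun i => hq (as i)))
      have h1 := key _ _ ht hqa
      rw [IP.evalO] at h1
      have hsome : ∀ i, (IP.evalO B (rep (as i))).isSome :=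
        fun i => IP.evalO_isSome (hvf (as i))
      rw [dif_pos hsome] at h1
      have h2 : B.ops f (fun i => (IP.evalO B (rep (as i))).get (hsome i)) =
          g ((genSub T s0).ops f as) := Option.some.inj h1
      rw [← h2]
    have hle : ∀ a, (genSub T s0).μ a ≤ B.μ (g a) := by
      intro a
      show T.μ a.val ≤ _
      rw [← hq a]
      refine sSup_le fun l hl => ?_
      have h1 : l ≤ B.μ (B.eval (fun _ => g a) (rep a)) :=
        IP.soundness hB hl (fun _ => g a) (fun ψ hψ => absurd hψ (Set.notMem_empty ψ))
      rwa [IP.evalO_eval (hg a)] at h1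
    refine ⟨⟨g, hle, hops, hconsts⟩, ?_⟩
    intro h'
    refine IP.hom_ext (funext fun a => ?_)
    have main : ∀ (t : Term (S.addConsts M.carrier) X), t.VarFree →
        ∀ (a : (genSub T s0).carrier), q t = a.val → h'.toFun a = g a := by
      intro t ht
      induction ht with
      | const c =>
        intro a hqa
        have ha : a = (genSub T s0).consts c := Subtype.ext hqa.symm
        rw [ha, h'.map_consts]
        exact (hconsts c).symm
      | op f ts hvfs ih =>
        intro a hqa
        have hgen : ∀ i, GenSet T s0 (q (ts i)) := fun i => IP.vf_gen s0 (hvfs i)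
        have ha : a = (genSub T s0).ops f (fun i => ⟨q (ts i), hgen i⟩) := by
          apply Subtype.ext
          rw [← hqa]
          exact (IP.ops_qm Θ f ts).symm
        rw [ha]; refine (h'.map_ops f _).trans (Eq.trans ?_ (hops f _).symm)
        exact congrArg _ (funext fun i => ih i _ rfl)
    exact main (rep a) (hvf a) a (hq a)
  exact ⟨T, q, IP.qm_surj Θ, IP.qm_eq Θ, fun t => rfl, fun c => rfl, IP.ops_qm Θ,
    fun m => le_sSup (Deriv.ax (Set.mem_union_right _ ⟨rfl, m, M.μ m, le_rfl, rfl⟩)),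
    hrep, hmodel, hinit⟩
end

section
/- Free model theorem: for any language L = (Σ, X) and any fuzzy theory Λ on L, the forgetful functor U_Λ : Mod(Λ) → Fuz(H) has a left adjoint F_Λ. Concretely, for every fuzzy set (M, μ_M) there is a model F_Λ(M, μ_M) of Λ and a fuzzy morphism η : (M, μ_M) → U_Λ(F_Λ(M, μ_M)) such that every fuzzy morphism g : (M, μ_M) → U_Λ(B) into a model B of Λ factors as U_Λ(ḡ) ∘ η for a unique Σ-algebra morphism ḡ : F_Λ(M, μ_M) → B. -/
universe u

/-! ### Auxiliary construction of the free model -/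

/-- Substitution of terms (possibly over other variables) for variables. -/
def Term.bind {S : Signature.{u}} {X Y : Type u} (σ : X → Term S Y) :
    Term S X → Term S Y
  | .var x => σ x
  | .const c => .const c
  | .op f ts => .op f fun i => (ts i).bind σ

lemma eval_bind {H : Type u} [Order.Frame H] {S : Signature.{u}} {X Y : Type u}
    (B : FuzzyAlgebra H S) (g : Y → B.carrier) (σ : X → Term S Y) (t : Term S X) :
    B.eval g (t.bind σ) = B.eval (fun x => B.eval g (σ x)) t := by
  induction t with
  | var x => rfl
  | const c => rfl
  | op f ts ih =>
      show B.ops f _ = B.ops f _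
      exact congrArg _ (funext fun i => ih i)

/-- A pointed model of `Λ` over `M`: a model together with a fuzzy map from `M`. -/
structure ModelPt {H : Type u} [Order.Frame H] {S : Signature.{u}} {X : Type u}
    (Λ : Theory H S X) (M : FuzzySet H) : Type (u + 1) where
  B : FuzzyAlgebra H S
  hB : B.IsModel Λ
  g : FuzzyHom M B.toFuzzySet

section FreeConstruction

variable {H : Type u} [Order.Frame H] {S : Signature.{u}} {X : Type u}
variable (Λ : Theory H S X) (M : FuzzySet H)

/-- Semantic equality of terms over `M`. -/
def relSetoid : Setoid (Term S M.carrier) where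
  r s t := ∀ p : ModelPt Λ M, p.B.eval p.g.toFun s = p.B.eval p.g.toFun t
  iseqv := ⟨fun _ _ => rfl, fun h p => (h p).symm, fun h h' p => (h p).trans (h' p)⟩

abbrev FreeCarrier : Type u := Quotient (relSetoid Λ M)

/-- The class of a term in the free carrier. -/
def mkq (t : Term S M.carrier) : FreeCarrier Λ M := Quotient.mk (relSetoid Λ M) t

lemma mkq_out (x : FreeCarrier Λ M) : mkq Λ M x.out = x := Quotient.out_eq x

lemma mkq_sound {s t : Term S M.carrier}
    (h : ∀ p : ModelPt Λ M, p.B.eval p.g.toFun s = p.B.eval p.g.toFun t) :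
    mkq Λ M s = mkq Λ M t := Quotient.sound h

lemma mkq_exact {s t : Term S M.carrier} (h : mkq Λ M s = mkq Λ M t) :
    ∀ p : ModelPt Λ M, p.B.eval p.g.toFun s = p.B.eval p.g.toFun t :=
  Quotient.exact h

/-- The free model. -/
noncomputable def FreeAlg : FuzzyAlgebra H S where
  carrier := FreeCarrier Λ M
  μ := Quotient.lift (fun t => ⨅ p : ModelPt Λ M, p.B.μ (p.B.eval p.g.toFun t))
    (fun s t h => congrArg _ (funext fun p => congrArg p.B.μ (h p)))
  ops f as := mkq Λ M (Term.op f fun i => (as i).out)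
  le_ops f as := by
    refine le_iInf fun p => ?_
    refine le_trans ?_ (p.B.le_ops f _)
    refine le_iInf fun i => ?_
    refine le_trans (iInf_le _ i) ?_
    rw [← mkq_out Λ M (as i)]
    exact iInf_le _ p
  consts c := mkq Λ M (Term.const c)

lemma FreeAlg_mu_mk (t : Term S M.carrier) :
    (FreeAlg Λ M).μ (mkq Λ M t) = ⨅ p : ModelPt Λ M, p.B.μ (p.B.eval p.g.toFun t) :=
  rfl

lemma FreeAlg_ops_mk (f : S.Op) (ts : Fin (S.ar f : ℕ) → Term S M.carrier) :
    (FreeAlg Λ M).ops f (fun i => mkq Λ M (ts i)) = mkq Λ M (Term.op f ts) := by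
  refine mkq_sound Λ M fun p => ?_
  show p.B.ops f _ = p.B.ops f _
  exact congrArg _ (funext fun i => mkq_exact Λ M (mkq_out Λ M (mkq Λ M (ts i))) p)

lemma FreeAlg_eval {Y : Type u} (ι : Y → FreeCarrier Λ M) (t : Term S Y) :
    (FreeAlg Λ M).eval ι t = mkq Λ M (t.bind (fun y => (ι y).out)) := by
  induction t with
  | var y => exact (mkq_out Λ M (ι y)).symm
  | const c => rfl
  | op f ts ih =>
      show (FreeAlg Λ M).ops f _ = _
      rw [show (fun i => (FreeAlg Λ M).eval ι (ts i))
            = (fun i => mkq Λ M ((ts i).bind (fun y => (ι y).out)))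
          from funext fun i => ih i]
      exact FreeAlg_ops_mk Λ M f _

lemma FreeAlg_isModel : (FreeAlg Λ M).IsModel Λ := by
  rintro ⟨Γ, φ⟩ hmem ι hΓ
  set σ : X → Term S M.carrier := fun x => (ι x).out with hσ
  have key : ∀ p : ModelPt Λ M,
      p.B.Sat (fun x => p.B.eval p.g.toFun (σ x)) φ := by
    intro p
    refine p.hB (Γ, φ) hmem _ fun ψ hψ => ?_
    have hs := hΓ ψ hψ
    cases ψ with
    | eq u v =>
        have h2 : mkq Λ M (u.bind σ) = mkq Λ M (v.bind σ) := by
          erw [← FreeAlg_eval, ← FreeAlg_eval]; exact hs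
        show p.B.eval _ u = p.B.eval _ v
        erw [← eval_bind, ← eval_bind]
        exact mkq_exact Λ M h2 p
    | mem l u =>
        have hs' : l ≤ (FreeAlg Λ M).μ (mkq Λ M (u.bind σ)) := by
          erw [← FreeAlg_eval]; exact hs
        rw [FreeAlg_mu_mk] at hs'
        show l ≤ p.B.μ (p.B.eval _ u)
        erw [← eval_bind]
        exact le_trans hs' (iInf_le _ p)
  cases φ with
  | eq s t =>
      show (FreeAlg Λ M).eval ι s = (FreeAlg Λ M).eval ι t
      erw [FreeAlg_eval, FreeAlg_eval]
      refine mkq_sound Λ M fun p => ?_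
      have h3 := key p
      erw [eval_bind, eval_bind]
      exact h3
  | mem l t =>
      show l ≤ (FreeAlg Λ M).μ ((FreeAlg Λ M).eval ι t)
      erw [FreeAlg_eval, FreeAlg_mu_mk]
      refine le_iInf fun p => ?_
      have h3 := key p
      erw [eval_bind]
      exact h3

end FreeConstruction

lemma FuzzyAlgHom.ext' {H : Type u} [Order.Frame H] {S : Signature.{u}}
    {A B : FuzzyAlgebra H S} {h1 h2 : FuzzyAlgHom A B}
    (h : h1.toFun = h2.toFun) : h1 = h2 := by
  cases h1; cases h2; cases h; rfl

/-- Free model theorem: for any fuzzy theory `Λ`, the forgetful functor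
`U_Λ : Mod(Λ) → Fuz(H)` has a left adjoint.  Concretely: for every fuzzy set
`(M, μ_M)` there is a model `F` of `Λ` together with a fuzzy morphism
`η : (M, μ_M) → U_Λ(F)` such that every fuzzy morphism `g : (M, μ_M) → U_Λ(B)` into
a model `B` of `Λ` factors as `U_Λ(ḡ) ∘ η` for a unique Σ-algebra morphism
`ḡ : F → B`. -/
theorem free_model_exists {H : Type u} [Order.Frame H] {S : Signature.{u}}
    {X : Type u} (Λ : Theory H S X) (M : FuzzySet H) :
    ∃ F : FuzzyAlgebra H S, F.IsModel Λ ∧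
      ∃ η : FuzzyHom M F.toFuzzySet,
        ∀ B : FuzzyAlgebra H S, B.IsModel Λ →
          ∀ g : FuzzyHom M B.toFuzzySet,
            ∃! gbar : FuzzyAlgHom F B,
              ∀ m : M.carrier, gbar.toFun (η.toFun m) = g.toFun m := by
  classical
  refine ⟨FreeAlg Λ M, FreeAlg_isModel Λ M, ⟨fun m => mkq Λ M (.var m),
      fun m => le_iInf fun p => p.g.le_mem m⟩, ?_⟩
  intro B hB g
  set p0 : ModelPt Λ M := ⟨B, hB, g⟩ with hp0
  refine ⟨⟨Quotient.lift (fun t => B.eval g.toFun t) (fun s t (h : (relSetoid Λ M).r s t) => h p0), ?_, ?_, ?_⟩,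
      fun m => rfl, ?_⟩
  · refine fun x => Quotient.inductionOn x fun t => ?_
    exact iInf_le (fun p : ModelPt Λ M => p.B.μ (p.B.eval p.g.toFun t)) p0
  · intro f as
    have key : Quotient.lift (fun t => B.eval g.toFun t) (fun s t (h : (relSetoid Λ M).r s t) => h p0)
          ((FreeAlg Λ M).ops f (fun i => mkq Λ M ((as i).out)))
        = B.ops f fun i => Quotient.lift (fun t => B.eval g.toFun t)
            (fun s t (h : (relSetoid Λ M).r s t) => h p0) (mkq Λ M ((as i).out)) := by
      rw [FreeAlg_ops_mk]
      rfl
    have e : ∀ i, mkq Λ M ((as i).out) = as i := fun i => mkq_out Λ M (as i)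
    simpa only [e] using key
  · intro c; rfl
  · intro h hη
    refine FuzzyAlgHom.ext' (funext fun x => ?_)
    refine Quotient.inductionOn x fun t => ?_
    show h.toFun (mkq Λ M t) = B.eval g.toFun t
    induction t with
    | var m => exact hη m
    | const c =>
        show h.toFun ((FreeAlg Λ M).consts c) = B.eval g.toFun (.const c)
        rw [h.map_consts]; rfl
    | op f ts ih =>
        rw [show mkq Λ M (Term.op f ts)
              = (FreeAlg Λ M).ops f (fun i => mkq Λ M (ts i)) from
            (FreeAlg_ops_mk Λ M f ts).symm]
        erw [h.map_ops]
        show B.ops f _ = B.ops f _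
        exact congrArg _ (funext fun i => ih i)
end

section
/- For any signature Σ, the class E_Σ of Σ-algebra morphisms whose underlying fuzzy-set map is an epimorphism (i.e. surjective) and the class M_Σ of Σ-algebra morphisms whose underlying fuzzy-set map is a strong monomorphism (i.e. injective and membership-preserving) form a proper factorization system on the category Alg(Σ) of Σ-fuzzy algebras. -/
universe u

/-- Identity morphism of Σ-fuzzy algebras. -/
def FuzzyAlgHom.id {H : Type u} [Order.Frame H] {S : Signature.{u}}
    (A : FuzzyAlgebra H S) : FuzzyAlgHom A A :=
  ⟨_root_.id, fun _ => le_rfl, fun _ _ => rfl, fun _ => rfl⟩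

/-- Composition of morphisms of Σ-fuzzy algebras. -/
def FuzzyAlgHom.comp {H : Type u} [Order.Frame H] {S : Signature.{u}}
    {A B C : FuzzyAlgebra H S} (f : FuzzyAlgHom A B) (g : FuzzyAlgHom B C) :
    FuzzyAlgHom A C where
  toFun := g.toFun ∘ f.toFun
  le_mem x := (f.le_mem x).trans (g.le_mem _)
  map_ops h as := by simp [Function.comp, f.map_ops, g.map_ops]
  map_consts c := by simp [Function.comp, f.map_consts, g.map_consts]

/-- The category `Alg(Σ)` of Σ-fuzzy algebras. -/
instance algCat {H : Type u} [Order.Frame H] {S : Signature.{u}} :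
    CategoryTheory.Category.{u} (FuzzyAlgebra H S) where
  Hom A B := FuzzyAlgHom A B
  id A := FuzzyAlgHom.id A
  comp f g := f.comp g
  id_comp _ := rfl
  comp_id _ := rfl
  assoc _ _ _ := rfl

/-- The forgetful functor `V_Σ : Alg(Σ) → Set`. -/
def forgetAlg (H : Type u) [Order.Frame H] (S : Signature.{u}) :
    CategoryTheory.Functor (FuzzyAlgebra H S) (Type u) where
  obj A := A.carrier
  map f := TypeCat.ofHom (FuzzyAlgHom.toFun f)
  map_id _ := rfl
  map_comp _ _ := rfl

/-- The term algebra on a set `X`: terms with membership constantly `⊥` and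
syntactic operations and constants. -/
def termAlgebra (H : Type u) [Order.Frame H] (S : Signature.{u}) (X : Type u) :
    FuzzyAlgebra H S where
  carrier := Term S X
  μ := fun _ => ⊥
  ops f ts := Term.op f ts
  le_ops f as := iInf_le (fun _ => (⊥ : H)) ⟨0, (S.ar f).pos⟩
  consts := Term.const

open CategoryTheory

/-! The diagonal of a square `u ≫ m = e ≫ v` with `e` surjective and `m` a strong monomorphism
is forced pointwise: `v (e a) = m (u a)` lies in the image of the injective map `m`, and the
resulting map is a morphism because `m` reflects membership degrees. Every morphism factors
through its image, a subalgebra of the codomain carrying the restricted degrees. -/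
namespace FuzzyAlgHom

variable {H : Type u} [Order.Frame H] {S : Signature.{u}} {A B C : FuzzyAlgebra H S}

theorem ext {f g : FuzzyAlgHom A B} (h : ∀ x, f.toFun x = g.toFun x) : f = g := by
  cases f; cases g; congr; exact funext h

@[simp]
theorem comp_toFun (f : A ⟶ B) (g : B ⟶ C) (x : A.carrier) :
    (f ≫ g).toFun x = g.toFun (f.toFun x) := rfl

@[simp]
theorem id_toFun (x : A.carrier) : (𝟙 A : A ⟶ A).toFun x = x := rfl

theorem toFun_inv_toFun (f : A ⟶ B) [IsIso f] (y : B.carrier) :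
    f.toFun ((inv f).toFun y) = y := by
  rw [← comp_toFun, IsIso.inv_hom_id, id_toFun]

theorem inv_toFun_toFun (f : A ⟶ B) [IsIso f] (x : A.carrier) :
    (inv f).toFun (f.toFun x) = x := by
  rw [← comp_toFun, IsIso.hom_inv_id, id_toFun]

/-- Strong monomorphism of the underlying fuzzy sets. -/
def IsStrongMono (m : FuzzyAlgHom A B) : Prop :=
  Function.Injective m.toFun ∧ ∀ x, B.μ (m.toFun x) = A.μ x

theorem IsStrongMono.comp {f : A ⟶ B} {g : B ⟶ C} (hf : IsStrongMono f)
    (hg : IsStrongMono g) : IsStrongMono (f ≫ g) :=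
  ⟨hg.1.comp hf.1, fun x => (hg.2 _).trans (hf.2 x)⟩

theorem surjective_of_isIso (f : A ⟶ B) [IsIso f] : Function.Surjective f.toFun :=
  fun y => ⟨_, toFun_inv_toFun f y⟩

theorem isStrongMono_of_isIso (f : A ⟶ B) [IsIso f] : IsStrongMono f := by
  refine ⟨Function.LeftInverse.injective (inv_toFun_toFun f), fun x => ?_⟩
  refine le_antisymm ?_ (f.le_mem x)
  simpa only [inv_toFun_toFun] using (inv f).le_mem (f.toFun x)

theorem epi_of_surjective (f : A ⟶ B) (hf : Function.Surjective f.toFun) : Epi f where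
  left_cancellation _ _ hgh := ext fun y => by
    obtain ⟨x, rfl⟩ := hf y
    exact congrFun (congrArg toFun hgh) x

theorem mono_of_injective (f : A ⟶ B) (hf : Function.Injective f.toFun) : Mono f where
  right_cancellation _ _ hgh := ext fun z => hf (congrFun (congrArg toFun hgh) z)

section Lift

variable {X : FuzzyAlgebra H S} {m : X ⟶ C} (hm : IsStrongMono m) (v : B ⟶ C)
  (hv : ∀ b, ∃ x, m.toFun x = v.toFun b)

noncomputable def IsStrongMono.lift : B ⟶ X where
  toFun b := (hv b).choose
  le_mem b := by
    rw [← hm.2, (hv b).choose_spec]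
    exact v.le_mem b
  map_ops f bs := hm.1 <| by
    rw [(hv _).choose_spec, m.map_ops, v.map_ops]
    exact congrArg (C.ops f) (funext fun i => ((hv (bs i)).choose_spec).symm)
  map_consts c := hm.1 <| by
    rw [(hv _).choose_spec, m.map_consts, v.map_consts]

theorem IsStrongMono.lift_comp : hm.lift v hv ≫ m = v :=
  ext fun b => (hv b).choose_spec

end Lift

theorem IsStrongMono.llp {X Y : FuzzyAlgebra H S} {e : A ⟶ B} {m : X ⟶ Y}
    (he : Function.Surjective e.toFun) (hm : IsStrongMono m) : LLP e m := by
  intro u v huv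
  have hv : ∀ b, ∃ x, m.toFun x = v.toFun b := fun b => by
    obtain ⟨a, rfl⟩ := he b
    exact ⟨u.toFun a, congrFun (congrArg toFun huv) a⟩
  have := m.mono_of_injective hm.1
  exact ⟨_, hm.lift_comp v hv, fun k hk => (cancel_mono m).1 (hk.trans (hm.lift_comp v hv).symm)⟩

end FuzzyAlgHom

namespace FuzzyAlgebra

variable {H : Type u} [Order.Frame H] {S : Signature.{u}}

section Sub

variable (B : FuzzyAlgebra H S) (s : Set B.carrier)
  (hops : ∀ f (bs : Fin (S.ar f : ℕ) → B.carrier), (∀ i, bs i ∈ s) → B.ops f bs ∈ s)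
  (hconsts : ∀ c, B.consts c ∈ s)

def sub : FuzzyAlgebra H S where
  carrier := s
  μ b := B.μ b
  ops f bs := ⟨B.ops f fun i => bs i, hops f _ fun i => (bs i).2⟩
  le_ops f _ := B.le_ops f _
  consts c := ⟨B.consts c, hconsts c⟩

def subι : B.sub s hops hconsts ⟶ B where
  toFun := Subtype.val
  le_mem _ := le_rfl
  map_ops _ _ := rfl
  map_consts _ := rfl

theorem isStrongMono_subι : (B.subι s hops hconsts).IsStrongMono :=
  ⟨Subtype.val_injective, fun _ => rfl⟩

end Sub

end FuzzyAlgebra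

namespace FuzzyAlgHom

variable {H : Type u} [Order.Frame H] {S : Signature.{u}} {A B : FuzzyAlgebra H S}

theorem ops_mem_range (f : A ⟶ B) (g : S.Op) (bs : Fin (S.ar g : ℕ) → B.carrier)
    (hbs : ∀ i, bs i ∈ Set.range f.toFun) : B.ops g bs ∈ Set.range f.toFun := by
  choose as has using hbs
  exact ⟨A.ops g as, by rw [f.map_ops]; simp only [has]⟩

def image (f : A ⟶ B) : FuzzyAlgebra H S :=
  B.sub (Set.range f.toFun) f.ops_mem_range fun c => ⟨A.consts c, f.map_consts c⟩

def imageι (f : A ⟶ B) : f.image ⟶ B := B.subι _ _ _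

def rangeRestrict (f : A ⟶ B) : A ⟶ f.image where
  toFun a := ⟨f.toFun a, a, rfl⟩
  le_mem := f.le_mem
  map_ops g as := Subtype.ext (f.map_ops g as)
  map_consts c := Subtype.ext (f.map_consts c)

theorem rangeRestrict_surjective (f : A ⟶ B) : Function.Surjective f.rangeRestrict.toFun := by
  rintro ⟨b, a, rfl⟩
  exact ⟨a, rfl⟩

theorem isStrongMono_imageι (f : A ⟶ B) : f.imageι.IsStrongMono :=
  B.isStrongMono_subι _ _ _

theorem rangeRestrict_comp_imageι (f : A ⟶ B) : f.rangeRestrict ≫ f.imageι = f :=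
  ext fun _ => rfl

end FuzzyAlgHom

/-- For any signature `Σ`, the Σ-algebra morphisms whose underlying map of fuzzy sets
is an epimorphism (i.e. surjective) and those whose underlying map is a strong
monomorphism (i.e. injective and membership-preserving) form a proper factorization
system on `Alg(Σ)`. -/
theorem alg_proper_factorization_system (H : Type u) [Order.Frame H]
    (S : Signature.{u}) :
    IsProperFactorizationSystem (FuzzyAlgebra H S)
      (fun _ _ f => Function.Surjective (FuzzyAlgHom.toFun f))
      (fun A B m => Function.Injective (FuzzyAlgHom.toFun m) ∧
        ∀ x, B.μ (FuzzyAlgHom.toFun m x) = A.μ x) := by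
  refine ⟨fun f g hf hg => hg.comp hf, fun f g hf hg => FuzzyAlgHom.IsStrongMono.comp hf hg,
    fun f _ => f.surjective_of_isIso, fun f _ => f.isStrongMono_of_isIso,
    FuzzyAlgHom.epi_of_surjective, fun f hf => f.mono_of_injective hf.1,
    fun _ _ he hm => FuzzyAlgHom.IsStrongMono.llp he hm, fun f => ?_⟩
  exact ⟨f.image, f.rangeRestrict, f.imageι, f.rangeRestrict_surjective,
    f.isStrongMono_imageι, f.rangeRestrict_comp_imageι⟩
end

section
/- HSP-type theorem: let V be a full subcategory of Alg(Σ). Then (1) V is closed under epimorphic images, small products and strong subalgebras (subobjects along strong monomorphisms) if and only if there exists a class {Λ_e}_{e∈E} of unconditional fuzzy theories such that A ∈ V iff A is a model of Λ_e for all e ∈ E; and (2) V is closed under split epimorphic images, small products and strong subalgebras if and only if there exists a class {Λ_e}_{e∈E} of type-E fuzzy theories such that A ∈ V iff A is a model of Λ_e for all e ∈ E. -/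
universe u

/-- The product of a family of Σ-fuzzy algebras: the cartesian product of the
carriers, with infimum membership and pointwise operations. -/
def prodAlg {H : Type u} [Order.Frame H] {S : Signature.{u}} {I : Type u}
    (A : I → FuzzyAlgebra H S) : FuzzyAlgebra H S where
  carrier := ∀ i, (A i).carrier
  μ a := ⨅ i, (A i).μ (a i)
  ops f as i := (A i).ops f fun j => as j i
  le_ops f as := le_iInf fun i =>
    le_trans (iInf_mono fun j => iInf_le (fun i' => (A i').μ (as j i')) i)
      ((A i).le_ops f fun j => as j i)
  consts c i := (A i).consts c

/-- A class of Σ-fuzzy algebras is closed under epimorphic images. -/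
def ClosedUnderEpi {H : Type u} [Order.Frame H] {S : Signature.{u}}
    (V : FuzzyAlgebra H S → Prop) : Prop :=
  ∀ (A B : FuzzyAlgebra H S) (h : FuzzyAlgHom A B),
    Function.Surjective h.toFun → V A → V B

/-- A class of Σ-fuzzy algebras is closed under split epimorphic images (images along
morphisms whose underlying map is split in `Fuz(H)`). -/
def ClosedUnderSplitEpi {H : Type u} [Order.Frame H] {S : Signature.{u}}
    (V : FuzzyAlgebra H S → Prop) : Prop :=
  ∀ (A B : FuzzyAlgebra H S) (h : FuzzyAlgHom A B),
    (∃ s : B.carrier → A.carrier,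
      (∀ b, B.μ b ≤ A.μ (s b)) ∧ ∀ b, h.toFun (s b) = b) →
    V A → V B

/-- A class of Σ-fuzzy algebras is closed under small products. -/
def ClosedUnderProd {H : Type u} [Order.Frame H] {S : Signature.{u}}
    (V : FuzzyAlgebra H S → Prop) : Prop :=
  ∀ (I : Type u) (A : I → FuzzyAlgebra H S), (∀ i, V (A i)) → V (prodAlg A)

/-- A class of Σ-fuzzy algebras is closed under strong subalgebras (subobjects along
morphisms whose underlying map is a strong monomorphism). -/
def ClosedUnderStrongSub {H : Type u} [Order.Frame H] {S : Signature.{u}}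
    (V : FuzzyAlgebra H S → Prop) : Prop :=
  ∀ (A B : FuzzyAlgebra H S) (h : FuzzyAlgHom A B),
    Function.Injective h.toFun → (∀ x, B.μ (h.toFun x) = A.μ x) → V B → V A

/-- An unconditional theory: every sequent has empty premise. -/
def Theory.Unconditional {H : Type u} [Order.Frame H] {S : Signature.{u}} {X : Type u}
    (Λ : Theory H S X) : Prop :=
  ∀ p ∈ Λ, p.1 = (∅ : Set (Formula H S X))

/-- A theory of type `E`: every premise of every sequent is a membership
proposition `∃_l x` with `x` a variable. -/
def Theory.TypeE {H : Type u} [Order.Frame H] {S : Signature.{u}} {X : Type u}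
    (Λ : Theory H S X) : Prop :=
  ∀ p ∈ Λ, ∀ φ ∈ p.1, ∃ (l : H) (x : X), φ = Formula.mem l (Term.var x)

/-!
Products and strong subalgebras preserve every sequent: satisfaction of atomic formulae is
computed componentwise in a product and is reflected along a strong monomorphism. A morphism
`h` with a right inverse `s` transports satisfaction through the assignment `s ∘ κ`, provided
the premises lift along `s`; this is automatic for empty premises and, for premises `∃_l x`,
is exactly what a split epimorphism of fuzzy sets provides.

Conversely, let `V` be closed under products and strong subalgebras, and let `A` satisfy every
sequent `{∃_{c a} a}_{a ∈ A} ⊢ φ` valid in `V`. A product of members of `V` carries a generic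
`c`-bounded assignment `ι` of the variables `A`: one satisfying only formulae that every
`c`-bounded assignment into `V` satisfies. The subalgebra generated by `ι` lies in `V` and
maps onto `A` by `ι a ↦ a`, with the section `a ↦ ι a` bounded below by `c`.
-/

variable {H : Type u} [Order.Frame H] {S : Signature.{u}} {X : Type u}

namespace FuzzyAlgHom

variable {A B : FuzzyAlgebra H S} (h : FuzzyAlgHom A B)

theorem map_eval (ι : X → A.carrier) (t : Term S X) :
    h.toFun (A.eval ι t) = B.eval (h.toFun ∘ ι) t := by
  induction t with
  | var x => rfl
  | const c => exact h.map_consts c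
  | op f ts ih => exact (h.map_ops f _).trans (congrArg (B.ops f) (funext ih))

theorem sat_comp {ι : X → A.carrier} {φ : Formula H S X} (hφ : A.Sat ι φ) :
    B.Sat (h.toFun ∘ ι) φ := by
  cases φ with
  | eq s t => exact (h.map_eval ι s).symm.trans ((congrArg h.toFun hφ).trans (h.map_eval ι t))
  | mem l t =>
    change l ≤ B.μ (B.eval _ t)
    exact h.map_eval ι t ▸ le_trans hφ (h.le_mem _)

theorem sat_comp_iff {h : FuzzyAlgHom A B} (hinj : Function.Injective h.toFun)
    (hμ : ∀ x, B.μ (h.toFun x) = A.μ x) {ι : X → A.carrier} {φ : Formula H S X} :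
    B.Sat (h.toFun ∘ ι) φ ↔ A.Sat ι φ := by
  cases φ with
  | eq s t =>
    change B.eval _ s = B.eval _ t ↔ A.eval ι s = A.eval ι t
    rw [← h.map_eval, ← h.map_eval, hinj.eq_iff]
  | mem l t =>
    change l ≤ B.μ (B.eval _ t) ↔ l ≤ A.μ (A.eval ι t)
    rw [← h.map_eval, hμ]

end FuzzyAlgHom

namespace FuzzyAlgebra

section Transfer

variable {A B : FuzzyAlgebra H S} {Λ : Theory H S X}

theorem IsModel.of_strongMono (h : FuzzyAlgHom A B) (hinj : Function.Injective h.toFun)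
    (hμ : ∀ x, B.μ (h.toFun x) = A.μ x) (hB : B.IsModel Λ) : A.IsModel Λ :=
  fun p hp _ hΓ =>
    (FuzzyAlgHom.sat_comp_iff hinj hμ).1
      (hB p hp _ fun ψ hψ => (FuzzyAlgHom.sat_comp_iff hinj hμ).2 (hΓ ψ hψ))

theorem IsModel.of_rightInverse (h : FuzzyAlgHom A B) {s : B.carrier → A.carrier}
    (hs : Function.RightInverse s h.toFun)
    (hΓ : ∀ p ∈ Λ, ∀ κ : X → B.carrier, (∀ ψ ∈ p.1, B.Sat κ ψ) → ∀ ψ ∈ p.1, A.Sat (s ∘ κ) ψ)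
    (hA : A.IsModel Λ) : B.IsModel Λ := by
  intro p hp κ hκ
  have hsat := h.sat_comp (hA p hp (s ∘ κ) (hΓ p hp κ hκ))
  rwa [← Function.comp_assoc, hs.comp_eq_id, Function.id_comp] at hsat

theorem prodAlg_eval {I : Type u} (A : I → FuzzyAlgebra H S) (ι : X → (prodAlg A).carrier)
    (t : Term S X) (i : I) : (prodAlg A).eval ι t i = (A i).eval (fun x => ι x i) t := by
  induction t with
  | var x => rfl
  | const c => rfl
  | op f ts ih => exact congrArg ((A i).ops f) (funext ih)

theorem prodAlg_sat_iff {I : Type u} {A : I → FuzzyAlgebra H S} {ι : X → (prodAlg A).carrier}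
    {φ : Formula H S X} : (prodAlg A).Sat ι φ ↔ ∀ i, (A i).Sat (fun x => ι x i) φ := by
  cases φ with
  | eq s t =>
    refine funext_iff.trans (forall_congr' fun i => ?_)
    rw [prodAlg_eval, prodAlg_eval]
    rfl
  | mem l t =>
    refine le_iInf_iff.trans (forall_congr' fun i => ?_)
    rw [prodAlg_eval]
    rfl

theorem isModel_prodAlg {I : Type u} {A : I → FuzzyAlgebra H S}
    (hA : ∀ i, (A i).IsModel Λ) : (prodAlg A).IsModel Λ :=
  fun p hp _ hΓ => prodAlg_sat_iff.2 fun i =>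
    hA i p hp _ fun ψ hψ => prodAlg_sat_iff.1 (hΓ ψ hψ) i

end Transfer

section EvalRange

variable (P : FuzzyAlgebra H S) (ι : X → P.carrier)

def evalRange : FuzzyAlgebra H S where
  carrier := Set.range (P.eval ι)
  μ a := P.μ a
  ops f as := ⟨P.ops f fun i => as i, .op f fun i => (as i).2.choose,
    congrArg (P.ops f) (funext fun i => (as i).2.choose_spec)⟩
  le_ops f as := P.le_ops f fun i => as i
  consts c := ⟨P.consts c, .const c, rfl⟩

def evalRangeVal : FuzzyAlgHom (P.evalRange ι) P where
  toFun := Subtype.val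
  le_mem _ := le_rfl
  map_ops _ _ := rfl
  map_consts _ := rfl

variable {P ι} {A : FuzzyAlgebra H S} {κ : X → A.carrier}

theorem eval_choose_eq (hPA : ∀ φ, P.Sat ι φ → A.Sat κ φ) (a : (P.evalRange ι).carrier)
    {t : Term S X} (ht : P.eval ι t = a.1) : A.eval κ a.2.choose = A.eval κ t :=
  hPA (.eq _ t) (a.2.choose_spec.trans ht.symm)

noncomputable def evalRangeLift (hPA : ∀ φ, P.Sat ι φ → A.Sat κ φ) :
    FuzzyAlgHom (P.evalRange ι) A where
  toFun a := A.eval κ a.2.choose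
  le_mem a := hPA (.mem (P.μ a.1) a.2.choose) (le_of_eq (congrArg P.μ a.2.choose_spec).symm)
  map_ops f as :=
    eval_choose_eq hPA _ (t := .op f fun i => (as i).2.choose)
      (congrArg (P.ops f) (funext fun i => (as i).2.choose_spec))
  map_consts c := eval_choose_eq hPA _ (t := .const c) rfl

theorem evalRangeLift_apply (hPA : ∀ φ, P.Sat ι φ → A.Sat κ φ) (t : Term S X) :
    (evalRangeLift hPA).toFun ⟨P.eval ι t, t, rfl⟩ = A.eval κ t :=
  eval_choose_eq hPA _ rfl

end EvalRange

end FuzzyAlgebra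

/-- The premises `{∃_{c x} x}_{x ∈ X}` of a sequent of type `E`. -/
def boundPremises (c : X → H) : Set (Formula H S X) :=
  Set.range fun x => .mem (c x) (.var x)

theorem sat_boundPremises_iff {A : FuzzyAlgebra H S} {κ : X → A.carrier} {c : X → H} :
    (∀ ψ ∈ boundPremises (S := S) c, A.Sat κ ψ) ↔ ∀ x, c x ≤ A.μ (κ x) :=
  Set.forall_mem_range

variable (V : FuzzyAlgebra H S → Prop)

def validSequents (Γ : Set (Formula H S X)) : Theory H S X :=
  {p | p.1 = Γ ∧ ∀ B, V B → B.SatSeq p.1 p.2}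

theorem isModel_validSequents {A : FuzzyAlgebra H S} (hA : V A) (Γ : Set (Formula H S X)) :
    A.IsModel (validSequents V Γ) :=
  fun _ hp => hp.2 A hA

/-- The product is indexed by the sets of formulae realised by `c`-bounded assignments into
members of `V`, which form a small type, unlike the assignments themselves. -/
theorem exists_generic_assignment (hprod : ClosedUnderProd V) (c : X → H) :
    ∃ P, V P ∧ ∃ ι : X → P.carrier, (∀ x, c x ≤ P.μ (ι x)) ∧
      ∀ φ, P.Sat ι φ → ∀ B, V B → B.SatSeq (boundPremises c) φ := by
  let D := {T : Set (Formula H S X) // ∃ (B : FuzzyAlgebra H S) (κ : X → B.carrier),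
    V B ∧ (∀ x, c x ≤ B.μ (κ x)) ∧ T = {φ | B.Sat κ φ}}
  choose B κ hB hκ hT using fun T : D => T.2
  refine ⟨prodAlg B, hprod D B hB, fun x T => κ T x, fun x => le_iInf fun T => hκ T x,
    fun φ hφ B' hB' κ' hκ' => ?_⟩
  let T : D := ⟨{φ | B'.Sat κ' φ}, B', κ', hB', sat_boundPremises_iff.1 hκ', rfl⟩
  exact (Set.ext_iff.1 (hT T) φ).2 (FuzzyAlgebra.prodAlg_sat_iff.1 hφ T)

theorem exists_cover (hprod : ClosedUnderProd V) (hsub : ClosedUnderStrongSub V)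
    (A : FuzzyAlgebra H S) (c : A.carrier → H)
    (hA : ∀ φ, (∀ B, V B → B.SatSeq (boundPremises c) φ) → A.Sat id φ) :
    ∃ F, V F ∧ ∃ (h : FuzzyAlgHom F A) (s : A.carrier → F.carrier),
      Function.RightInverse s h.toFun ∧ ∀ a, c a ≤ F.μ (s a) := by
  obtain ⟨P, hP, ι, hιc, hgen⟩ := exists_generic_assignment V hprod c
  exact ⟨P.evalRange ι, hsub _ P (P.evalRangeVal ι) Subtype.val_injective (fun _ => rfl) hP,
    FuzzyAlgebra.evalRangeLift fun φ hφ => hA φ (hgen φ hφ), fun a => ⟨ι a, .var a, rfl⟩,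
    fun a => FuzzyAlgebra.evalRangeLift_apply _ (.var a), hιc⟩

theorem of_isModel_validSequents_empty (hepi : ClosedUnderEpi V) (hprod : ClosedUnderProd V)
    (hsub : ClosedUnderStrongSub V) {A : FuzzyAlgebra H S}
    (hA : A.IsModel (validSequents V (∅ : Set (Formula H S A.carrier)))) : V A := by
  obtain ⟨F, hF, h, s, hs, -⟩ := exists_cover V hprod hsub A ⊥ fun φ hφ =>
    hA (∅, φ) ⟨rfl, fun B hB κ _ => hφ B hB κ (sat_boundPremises_iff.2 fun _ => bot_le)⟩ id
      fun _ => False.elim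
  exact hepi F A h hs.surjective hF

theorem of_isModel_validSequents_boundPremises (hsplit : ClosedUnderSplitEpi V)
    (hprod : ClosedUnderProd V) (hsub : ClosedUnderStrongSub V) {A : FuzzyAlgebra H S}
    (hA : A.IsModel (validSequents V (boundPremises A.μ))) : V A := by
  obtain ⟨F, hF, h, s, hs, hsμ⟩ := exists_cover V hprod hsub A A.μ fun φ hφ =>
    hA (boundPremises A.μ, φ) ⟨rfl, hφ⟩ id (sat_boundPremises_iff.2 fun _ => le_rfl)
  exact hsplit F A h ⟨s, hsμ, hs⟩ hF

section Closure

variable {ι : Type*} {Xe : ι → Type u} (Λ : ∀ e, Theory H S (Xe e))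

theorem closedUnderProd_isModel : ClosedUnderProd fun A => ∀ e, A.IsModel (Λ e) :=
  fun _ _ hA e => FuzzyAlgebra.isModel_prodAlg fun i => hA i e

theorem closedUnderStrongSub_isModel : ClosedUnderStrongSub fun A => ∀ e, A.IsModel (Λ e) :=
  fun _ _ h hinj hμ hB e => (hB e).of_strongMono h hinj hμ

theorem closedUnderEpi_isModel (hΛ : ∀ e, (Λ e).Unconditional) :
    ClosedUnderEpi fun A => ∀ e, A.IsModel (Λ e) :=
  fun _ _ h hh hA e => (hA e).of_rightInverse h (Function.rightInverse_surjInv hh)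
    fun p hp _ _ ψ hψ => absurd (hΛ e p hp ▸ hψ) (Set.notMem_empty ψ)

theorem closedUnderSplitEpi_isModel (hΛ : ∀ e, (Λ e).TypeE) :
    ClosedUnderSplitEpi fun A => ∀ e, A.IsModel (Λ e) := by
  rintro A B h ⟨s, hsμ, hs⟩ hA e
  refine (hA e).of_rightInverse h hs fun p hp κ hκ ψ hψ => ?_
  obtain ⟨l, x, rfl⟩ := hΛ e p hp ψ hψ
  exact le_trans (hκ _ hψ) (hsμ (κ x))

end Closure

/-- HSP-type theorem: a class `V` of Σ-fuzzy algebras is closed under epimorphic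
images, small products and strong subalgebras iff it is the class of common models of
a class of unconditional theories; it is closed under split epimorphic images, small
products and strong subalgebras iff it is the class of common models of a class of
theories of type `E`. -/
theorem hsp_theorems {H : Type u} [Order.Frame H] {S : Signature.{u}}
    (V : FuzzyAlgebra H S → Prop) :
    ((ClosedUnderEpi V ∧ ClosedUnderProd V ∧ ClosedUnderStrongSub V) ↔
      ∃ (ι : Type (u + 1)) (Xe : ι → Type u) (Λ : ∀ e : ι, Theory H S (Xe e)),
        (∀ e, (Λ e).Unconditional) ∧
        ∀ A : FuzzyAlgebra H S, V A ↔ ∀ e, A.IsModel (Λ e)) ∧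
    ((ClosedUnderSplitEpi V ∧ ClosedUnderProd V ∧ ClosedUnderStrongSub V) ↔
      ∃ (ι : Type (u + 1)) (Xe : ι → Type u) (Λ : ∀ e : ι, Theory H S (Xe e)),
        (∀ e, (Λ e).TypeE) ∧
        ∀ A : FuzzyAlgebra H S, V A ↔ ∀ e, A.IsModel (Λ e)) := by
  refine ⟨⟨fun ⟨hepi, hprod, hsub⟩ => ?_, ?_⟩, ⟨fun ⟨hsplit, hprod, hsub⟩ => ?_, ?_⟩⟩
  · refine ⟨FuzzyAlgebra H S, fun A => A.carrier, fun _ => validSequents V ∅,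
      fun _ _ hp => hp.1, fun A => ⟨fun hA _ => isModel_validSequents V hA ∅, fun hA => ?_⟩⟩
    exact of_isModel_validSequents_empty V hepi hprod hsub (hA A)
  · rintro ⟨ι, Xe, Λ, hΛ, hV⟩
    obtain rfl : V = fun A => ∀ e, A.IsModel (Λ e) := funext fun A => propext (hV A)
    exact ⟨closedUnderEpi_isModel Λ hΛ, closedUnderProd_isModel Λ, closedUnderStrongSub_isModel Λ⟩
  · refine ⟨FuzzyAlgebra H S, fun A => A.carrier, fun A => validSequents V (boundPremises A.μ),
      fun _ _ hp _ hψ => ?_, fun A => ⟨fun hA _ => isModel_validSequents V hA _, fun hA => ?_⟩⟩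
    · obtain ⟨x, rfl⟩ := hp.1 ▸ hψ
      exact ⟨_, x, rfl⟩
    · exact of_isModel_validSequents_boundPremises V hsplit hprod hsub (hA A)
  · rintro ⟨ι, Xe, Λ, hΛ, hV⟩
    obtain rfl : V = fun A => ∀ e, A.IsModel (Λ e) := funext fun A => propext (hV A)
    exact ⟨closedUnderSplitEpi_isModel Λ hΛ, closedUnderProd_isModel Λ,
      closedUnderStrongSub_isModel Λ⟩
end
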